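/- Let p ≥ 3 be a prime, let F be the free group on 3 generators, and let G = F/(γ_3(F)F^p). Then for every x ∈ G one has {[x,g] : g ∈ G} ≠ G'; indeed |{[x,g] : g ∈ G}| ≤ p^2 while |G'| = p^3. -/

import Mathlib

/-!
STATEMENT 17: Let p ≥ 3 be a prime, let F be the free group on 3 generators,
and let G = F/(γ_3(F)F^p).  Then for every x ∈ G one has
{[x,g] : g ∈ G} ≠ G'; indeed |{[x,g] : g ∈ G}| ≤ p^2 while |G'| = p^3.

Here γ_3(F) = lowerCentralSeries F 2, F^p = sgPow ⊤ p = ⟨f^p : f ∈ F⟩, the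
product γ_3(F)F^p of the two normal subgroups is their join, and G' is
`commutator G`.
-/

/-- The subgroup `⟨h^n : h ∈ H⟩` generated by the `n`-th powers of elements of `H`. -/
def sgPow {G : Type*} [Group G] (H : Subgroup G) (n : ℕ) : Subgroup G :=
  Subgroup.closure ((· ^ n) '' (H : Set G))

/-- `G^n = ⟨g^n : g ∈ G⟩` is a normal subgroup. -/
instance sgPow_top_normal (G : Type*) [Group G] (n : ℕ) :
    (sgPow (⊤ : Subgroup G) n).Normal := by
  constructor
  intro x hx g
  unfold sgPow at *
  induction hx using Subgroup.closure_induction with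
  | mem y hy =>
    obtain ⟨z, -, rfl⟩ := hy
    refine Subgroup.subset_closure ⟨g * z * g⁻¹, trivial, ?_⟩
    show (g * z * g⁻¹) ^ n = g * z ^ n * g⁻¹
    induction n with
    | zero => group
    | succ m ih =>
      rw [pow_succ, pow_succ, ih]
      group
  | one => simpa using Subgroup.one_mem _
  | mul a b _ _ ha hb =>
    have : g * (a * b) * g⁻¹ = (g * a * g⁻¹) * (g * b * g⁻¹) := by group
    rw [this]; exact Subgroup.mul_mem _ ha hb
  | inv a _ ha =>
    have : g * a⁻¹ * g⁻¹ = (g * a * g⁻¹)⁻¹ := by group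
    rw [this]; exact Subgroup.inv_mem _ ha

/-- The normal subgroup `γ_3(F)F^p` of the free group `F` on 3 generators. -/
def NN (p : ℕ) : Subgroup (FreeGroup (Fin 3)) :=
  (⊤ : Subgroup (FreeGroup (Fin 3))).lowerCentralSeries 2 ⊔ sgPow (⊤ : Subgroup (FreeGroup (Fin 3))) p

instance NN_normal (p : ℕ) : (NN p).Normal := by
  unfold NN; infer_instance

open scoped commutatorElement

/-!
The group `G = F/γ₃(F)F^p` has class two and exponent `p` and is generated by the images `xᵢ` of
the free generators. In a group of class two `g ↦ ⁅a, g⁆` is a homomorphism, so `G'` is generated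
by the three commuting elements `⁅xᵢ, xⱼ⁆` (`i < j`) and `|G'|` divides `p³`; likewise `G/G'`
is abelian of exponent `p` on three generators. For fixed `a`, `g ↦ ⁅a, g⁆` factors through
`G/G'` and kills `a`, so when `a ∉ G'` its image has order dividing `p³ / p`.

For `|G'| ≥ p³`, map `G` to the Heisenberg group of the bilinear map `(v, w) ↦ (vᵢ wⱼ)_{i<j}`
over `ZMod p`: it has class two and, `p` being odd, exponent `p`, and its central subgroup
`0 × (ZMod p)³` is generated by the commutators of the images of the generators.
-/

open Subgroup

section ClassTwo

variable {G : Type*} [Group G]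

theorem lowerCentralSeries_two_eq_bot_iff :
    (⊤ : Subgroup G).lowerCentralSeries 2 = ⊥ ↔ commutator G ≤ center G :=
  commutator_top_right_eq_bot_iff_le_center

theorem commutatorElement_mem_center (hG : commutator G ≤ center G) (a b : G) :
    ⁅a, b⁆ ∈ center G :=
  hG (commutator_mem_commutator (mem_top a) (mem_top b))

def commutatorRightHom (hG : commutator G ≤ center G) (a : G) : G →* G where
  toFun := (⁅a, ·⁆)
  map_one' := commutatorElement_one_right a
  map_mul' b c := by
    rw [commutatorElement_mul_right_eq_mul_conj, mul_assoc _ b,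
      mem_center_iff.mp (commutatorElement_mem_center hG a c) b, ← mul_assoc,
      mul_inv_cancel_right]

theorem commutatorRightHom_apply (hG : commutator G ≤ center G) (a b : G) :
    commutatorRightHom hG a b = ⁅a, b⁆ := rfl

theorem commutator_le_closure_commutator_lt (hG : commutator G ≤ center G) {ι : Type*}
    [LinearOrder ι] (x : ι → G) (hx : closure (Set.range x) = ⊤) :
    commutator G ≤ closure (Set.range fun q : {q : ι × ι // q.1 < q.2} => ⁅x q.1.1, x q.1.2⁆) := by
  set C := closure (Set.range fun q : {q : ι × ι // q.1 < q.2} => ⁅x q.1.1, x q.1.2⁆)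
  have comm_gen_gen (i j : ι) : ⁅x i, x j⁆ ∈ C := by
    rcases lt_trichotomy i j with h | rfl | h
    · exact subset_closure ⟨⟨(i, j), h⟩, rfl⟩
    · simp
    · rw [← commutatorElement_inv]
      exact inv_mem (subset_closure ⟨⟨(j, i), h⟩, rfl⟩)
  have comm_gen_any (i : ι) (b : G) : ⁅x i, b⁆ ∈ C := by
    suffices ⊤ ≤ C.comap (commutatorRightHom hG (x i)) from this (mem_top b)
    rw [← hx, closure_le]
    rintro _ ⟨j, rfl⟩
    exact comm_gen_gen i j
  rw [_root_.commutator_def, commutator_le]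
  intro a _ b _
  suffices ⊤ ≤ C.comap (commutatorRightHom hG b) by
    rw [← commutatorElement_inv]
    exact inv_mem (this (mem_top a))
  rw [← hx, closure_le]
  rintro _ ⟨i, rfl⟩
  rw [SetLike.mem_coe, mem_comap, commutatorRightHom_apply, ← commutatorElement_inv]
  exact inv_mem (comm_gen_any i b)

theorem commutator_le_ker_commutatorRightHom (hG : commutator G ≤ center G) (a : G) :
    commutator G ≤ (commutatorRightHom hG a).ker := fun z hz => by
  rw [MonoidHom.mem_ker, commutatorRightHom_apply, commutatorElement_eq_one_iff_mul_comm]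
  exact mem_center_iff.mp (hG hz) a

theorem card_setOf_commutatorElement_dvd (hG : commutator G ≤ center G) {p k : ℕ}
    (hp : p.Prime) (hexp : ∀ g : G, g ^ p = 1) (hQ : Nat.card (G ⧸ commutator G) ∣ p ^ (k + 1))
    (a : G) : Nat.card {y | ∃ g : G, y = ⁅a, g⁆} ∣ p ^ k := by
  by_cases ha : a ∈ commutator G
  · have : {y | ∃ g : G, y = ⁅a, g⁆} = {1} := by
      ext y
      simp only [Set.mem_ofPred_eq, Set.mem_singleton_iff]
      refine ⟨fun ⟨g, hy⟩ => ?_, fun hy => ⟨1, by rw [hy, commutatorElement_one_right]⟩⟩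
      rw [hy, commutatorElement_eq_one_iff_mul_comm]
      exact (mem_center_iff.mp (hG ha) g).symm
    simp [this]
  set f := QuotientGroup.lift _ _ (commutator_le_ker_commutatorRightHom hG a)
  have hrange : {y | ∃ g : G, y = ⁅a, g⁆} = f.range := by
    ext y
    simp only [Set.mem_ofPred_eq, SetLike.mem_coe, MonoidHom.mem_range,
      QuotientGroup.mk_surjective.exists, eq_comm (a := y)]
    rfl
  have hp_dvd_ker : p ∣ Nat.card f.ker := by
    have := Fact.mk hp
    have horder : orderOf (a : G ⧸ commutator G) = p := by
      refine orderOf_eq_prime ?_ ?_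
      · rw [← QuotientGroup.mk_pow, hexp, QuotientGroup.mk_one]
      · rwa [Ne, QuotientGroup.eq_one_iff]
    rw [← horder, ← Nat.card_zpowers]
    refine card_dvd_of_le (zpowers_le.mpr ?_)
    exact commutatorElement_self a
  rw [hrange]
  have hcard : Nat.card f.ker * Nat.card f.range = Nat.card (G ⧸ commutator G) := by
    rw [← index_ker f, card_mul_index]
  refine Nat.dvd_of_mul_dvd_mul_left hp.pos ?_
  rw [← pow_succ']
  exact (Nat.mul_dvd_mul_right hp_dvd_ker _).trans (hcard ▸ hQ)

end ClassTwo

open scoped IsMulCommutative in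
theorem card_closure_range_dvd_pow {G κ : Type*} [Group G] [Finite κ] (f : κ → G)
    (hf : ∀ i j, Commute (f i) (f j)) {n : ℕ} (hexp : ∀ g : G, g ^ n = 1) :
    Nat.card (closure (Set.range f)) ∣ n ^ Nat.card κ := by
  have : IsMulCommutative (closure (Set.range f)) :=
    isMulCommutative_closure (by rintro _ ⟨i, rfl⟩ _ ⟨j, rfl⟩; exact hf i j)
  refine (card_dvd_exponent_pow_rank' _ fun g => Subtype.ext (hexp g)).trans (pow_dvd_pow n ?_)
  exact (rank_closure_finite_le_nat_card _).trans (Finite.card_range_le f)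

section Generators

variable {G ι : Type*} [Group G] {x : ι → G} {n : ℕ}

theorem card_quotient_commutator_dvd_pow [Finite ι] (hx : closure (Set.range x) = ⊤)
    (hexp : ∀ g : G, g ^ n = 1) :
    Nat.card (G ⧸ commutator G) ∣ n ^ Nat.card ι := by
  have hsurj : Function.Surjective (Abelianization.of : G →* Abelianization G) :=
    QuotientGroup.mk_surjective
  have htop : closure (Set.range (Abelianization.of ∘ x)) = ⊤ := by
    rw [Set.range_comp, ← MonoidHom.map_closure, hx, map_top_of_surjective _ hsurj]
  have hexp' (g : Abelianization G) : g ^ n = 1 := by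
    obtain ⟨g, rfl⟩ := hsurj g
    rw [← map_pow, hexp, map_one]
  have := card_closure_range_dvd_pow (Abelianization.of ∘ x) (fun i j => Commute.all _ _) hexp'
  rwa [htop, card_top] at this

theorem card_commutator_dvd_pow [Finite ι] [LinearOrder ι] (hG : commutator G ≤ center G)
    (hx : closure (Set.range x) = ⊤) (hexp : ∀ g : G, g ^ n = 1) :
    Nat.card (commutator G) ∣ n ^ Nat.card {q : ι × ι // q.1 < q.2} := by
  refine (card_dvd_of_le (commutator_le_closure_commutator_lt hG x hx)).trans ?_
  refine card_closure_range_dvd_pow _ (fun q r => ?_) hexp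
  exact (mem_center_iff.mp (commutatorElement_mem_center hG _ _) _).symm

end Generators

section

variable {V W : Type*} [AddCommGroup V] [AddCommGroup W]

@[ext]
structure Heisenberg (β : V →+ V →+ W) where
  fst : V
  snd : W

namespace Heisenberg

variable {β : V →+ V →+ W}

instance : Mul (Heisenberg β) := ⟨fun x y => ⟨x.fst + y.fst, x.snd + y.snd + β x.fst y.fst⟩⟩
instance : One (Heisenberg β) := ⟨⟨0, 0⟩⟩
instance : Inv (Heisenberg β) := ⟨fun x => ⟨-x.fst, -x.snd + β x.fst x.fst⟩⟩

@[simp] theorem fst_mul (x y : Heisenberg β) : (x * y).fst = x.fst + y.fst := rfl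
@[simp] theorem snd_mul (x y : Heisenberg β) : (x * y).snd = x.snd + y.snd + β x.fst y.fst := rfl
@[simp] theorem fst_one : (1 : Heisenberg β).fst = 0 := rfl
@[simp] theorem snd_one : (1 : Heisenberg β).snd = 0 := rfl
@[simp] theorem fst_inv (x : Heisenberg β) : x⁻¹.fst = -x.fst := rfl
@[simp] theorem snd_inv (x : Heisenberg β) : x⁻¹.snd = -x.snd + β x.fst x.fst := rfl

instance : Group (Heisenberg β) where
  mul_assoc x y z := by ext <;> simp <;> abel
  one_mul x := by ext <;> simp
  mul_one x := by ext <;> simp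
  inv_mul_cancel x := by ext <;> simp

@[simp] theorem fst_pow (x : Heisenberg β) (n : ℕ) : (x ^ n).fst = n • x.fst := by
  induction n with
  | zero => simp
  | succ n ih => rw [pow_succ, fst_mul, ih, succ_nsmul]

@[simp] theorem snd_pow (x : Heisenberg β) (n : ℕ) :
    (x ^ n).snd = n • x.snd + n.choose 2 • β x.fst x.fst := by
  induction n with
  | zero => simp
  | succ n ih =>
    have hchoose : (n + 1).choose 2 = n.choose 2 + n := by
      simp [Nat.choose_succ_succ, add_comm]
    rw [pow_succ, snd_mul, ih, fst_pow, hchoose]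
    simp only [map_nsmul, AddMonoidHom.nsmul_apply, add_nsmul, one_nsmul]
    abel

theorem commutatorElement_eq (x y : Heisenberg β) :
    ⁅x, y⁆ = ⟨0, β x.fst y.fst - β y.fst x.fst⟩ := by
  ext <;> simp [commutatorElement_def]
  abel

def inr : Multiplicative W →* Heisenberg β where
  toFun w := ⟨0, w.toAdd⟩
  map_one' := rfl
  map_mul' _ _ := by ext <;> simp

theorem inr_injective : Function.Injective (inr : Multiplicative W →* Heisenberg β) :=
  fun _ _ h => congrArg Heisenberg.snd h

theorem commutator_le_center : commutator (Heisenberg β) ≤ center (Heisenberg β) := by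
  rw [_root_.commutator_def, commutator_le]
  intro x _ y _
  rw [mem_center_iff]
  intro z
  ext <;> simp [commutatorElement_eq]
  abel

theorem pow_eq_one {p : ℕ} (hp : p.Prime) (hp2 : 2 < p) (hV : ∀ v : V, p • v = 0)
    (hW : ∀ w : W, p • w = 0) (x : Heisenberg β) : x ^ p = 1 := by
  obtain ⟨m, hm⟩ := hp.dvd_choose_self two_ne_zero hp2
  ext
  · simp [hV]
  · simp [hW, hm, mul_nsmul']

end Heisenberg

end

section PairProduct

variable (R ι : Type*) [CommRing R] [LinearOrder ι]

def pairProduct : (ι → R) →+ (ι → R) →+ ({q : ι × ι // q.1 < q.2} → R) :=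
  AddMonoidHom.mk'
    (fun v => AddMonoidHom.mk' (fun w q => v q.1.1 * w q.1.2) fun w w' => by ext; simp [mul_add])
    fun v v' => by ext; simp [add_mul]

variable {R ι}

@[simp] theorem pairProduct_apply (v w : ι → R) (q : {q : ι × ι // q.1 < q.2}) :
    pairProduct R ι v w q = v q.1.1 * w q.1.2 := rfl

namespace Heisenberg

variable (R) in
def basis (i : ι) : Heisenberg (pairProduct R ι) := ⟨Pi.single i 1, 0⟩

theorem commutatorElement_basis (q : {q : ι × ι // q.1 < q.2}) :
    ⁅basis R q.1.1, basis R q.1.2⁆ = inr (.ofAdd (Pi.single q 1)) := by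
  obtain ⟨⟨i, j⟩, h⟩ := q
  rw [commutatorElement_eq]
  ext : 1
  · rfl
  · ext ⟨⟨k, l⟩, hkl⟩
    simp [basis, inr, Pi.single_apply]
    grind

theorem range_inr_le_closure_commutatorElement_basis {n : ℕ} [NeZero n] [Fintype ι] :
    (inr : Multiplicative ({q : ι × ι // q.1 < q.2} → ZMod n) →* _).range ≤
      closure (Set.range fun q : {q : ι × ι // q.1 < q.2} =>
        ⁅basis (ZMod n) q.1.1, basis (ZMod n) q.1.2⁆) := by
  rintro _ ⟨w, rfl⟩
  have hw : w = ∏ q, .ofAdd (Pi.single q (w.toAdd q)) := by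
    rw [← ofAdd_sum, Finset.univ_sum_single]
    rfl
  rw [← mem_comap, hw]
  refine prod_mem fun q _ => ?_
  rw [mem_comap]
  have hsingle : Pi.single q (w.toAdd q) =
      (w.toAdd q).val • (Pi.single q 1 : {q : ι × ι // q.1 < q.2} → ZMod n) := by
    rw [← Pi.single_smul, nsmul_eq_mul, mul_one, ZMod.natCast_zmod_val]
  rw [hsingle, ofAdd_nsmul, map_pow, ← commutatorElement_basis]
  exact pow_mem (subset_closure (Set.mem_range_self q)) _

theorem card_range_inr {n : ℕ} [Fintype ι] :
    Nat.card (inr : Multiplicative ({q : ι × ι // q.1 < q.2} → ZMod n) →*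
      Heisenberg (pairProduct (ZMod n) ι)).range = n ^ Nat.card {q : ι × ι // q.1 < q.2} := by
  rw [← Nat.card_congr (MonoidHom.ofInjective inr_injective).toEquiv,
    Nat.card_congr Multiplicative.toAdd, Nat.card_fun, Nat.card_zmod]

end Heisenberg

end PairProduct

theorem card_pairs_fin_three : Nat.card {q : Fin 3 × Fin 3 // q.1 < q.2} = 3 := by
  rw [Nat.card_eq_fintype_card]
  rfl

theorem NN_le_ker {K : Type*} [Group K] (hK : commutator K ≤ center K) {p : ℕ}
    (hexp : ∀ k : K, k ^ p = 1) (f : FreeGroup (Fin 3) →* K) : NN p ≤ f.ker := by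
  refine sup_le ?_ ?_
  · rw [← Subgroup.map_eq_bot_iff, map_lowerCentralSeries, eq_bot_iff,
      ← (lowerCentralSeries_two_eq_bot_iff.mpr hK)]
    exact lowerCentralSeries_mono 2 le_top
  · rw [sgPow, closure_le]
    rintro _ ⟨g, -, rfl⟩
    rw [SetLike.mem_coe, MonoidHom.mem_ker, map_pow, hexp]

section FreeQuotient

variable {p : ℕ}

variable (p) in
theorem commutator_le_center_freeQuotient :
    commutator (FreeGroup (Fin 3) ⧸ NN p) ≤ center (FreeGroup (Fin 3) ⧸ NN p) := by
  rw [← lowerCentralSeries_two_eq_bot_iff,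
    ← map_top_of_surjective _ (QuotientGroup.mk'_surjective (NN p)), ← map_lowerCentralSeries,
    Subgroup.map_eq_bot_iff, QuotientGroup.ker_mk']
  exact le_sup_left

theorem pow_eq_one_freeQuotient (g : FreeGroup (Fin 3) ⧸ NN p) : g ^ p = 1 := by
  induction g using QuotientGroup.induction_on with
  | H f =>
    rw [← QuotientGroup.mk_pow, QuotientGroup.eq_one_iff]
    exact mem_sup_right (subset_closure ⟨f, trivial, rfl⟩)

variable (p) in
theorem closure_range_mk_of :
    closure (Set.range fun i : Fin 3 => (FreeGroup.of i : FreeGroup (Fin 3) ⧸ NN p)) = ⊤ := by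
  rw [← Function.comp_def, Set.range_comp, ← QuotientGroup.coe_mk', ← MonoidHom.map_closure,
    FreeGroup.closure_range_of, map_top_of_surjective _ (QuotientGroup.mk'_surjective _)]

theorem pow_dvd_card_commutator_freeQuotient (hp : p.Prime) (hp3 : 3 ≤ p) :
    p ^ 3 ∣ Nat.card (commutator (FreeGroup (Fin 3) ⧸ NN p)) := by
  have : Fact p.Prime := ⟨hp⟩
  have hH : ∀ h : Heisenberg (pairProduct (ZMod p) (Fin 3)), h ^ p = 1 :=
    Heisenberg.pow_eq_one hp hp3 (fun v => by ext; simp) (fun w => by ext; simp)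
  set φ := QuotientGroup.lift (NN p) (FreeGroup.lift (Heisenberg.basis (ZMod p)))
    (NN_le_ker Heisenberg.commutator_le_center hH _)
  have hle : Heisenberg.inr.range ≤ (commutator _).map φ := by
    refine Heisenberg.range_inr_le_closure_commutatorElement_basis.trans ((closure_le _).mpr ?_)
    rintro _ ⟨q, rfl⟩
    refine ⟨⁅(FreeGroup.of q.1.1 : FreeGroup (Fin 3) ⧸ NN p), FreeGroup.of q.1.2⁆,
      commutator_mem_commutator (mem_top _) (mem_top _), ?_⟩
    simp [φ, map_commutatorElement]
  have hcard := (card_dvd_of_le hle).trans (card_map_dvd _ _)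
  rwa [Heisenberg.card_range_inr, card_pairs_fin_three] at hcard

end FreeQuotient

theorem no_single_commutator_word_in_free_quotient
    (p : ℕ) (hp : p.Prime) (hp3 : 3 ≤ p) :
    ∀ x : FreeGroup (Fin 3) ⧸ NN p,
      {y | ∃ g : FreeGroup (Fin 3) ⧸ NN p, y = ⁅x, g⁆} ≠
        ((commutator (FreeGroup (Fin 3) ⧸ NN p) : Subgroup _) : Set (FreeGroup (Fin 3) ⧸ NN p)) ∧
      Nat.card {y | ∃ g : FreeGroup (Fin 3) ⧸ NN p, y = ⁅x, g⁆} ≤ p ^ 2 ∧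
      Nat.card (commutator (FreeGroup (Fin 3) ⧸ NN p)) = p ^ 3 := by
  intro x
  have hG := commutator_le_center_freeQuotient p
  have hgen := closure_range_mk_of p
  have hQ := card_quotient_commutator_dvd_pow hgen pow_eq_one_freeQuotient
  rw [Nat.card_fin] at hQ
  have hG' : Nat.card (commutator (FreeGroup (Fin 3) ⧸ NN p)) = p ^ 3 := by
    refine Nat.dvd_antisymm ?_ (pow_dvd_card_commutator_freeQuotient hp hp3)
    simpa only [card_pairs_fin_three] using card_commutator_dvd_pow hG hgen pow_eq_one_freeQuotient
  have hx := Nat.le_of_dvd (pow_pos hp.pos 2) <|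
    card_setOf_commutatorElement_dvd hG hp pow_eq_one_freeQuotient hQ x
  refine ⟨fun h => ?_, hx, hG'⟩
  rw [h, SetLike.coe_sort_coe, hG'] at hx
  exact absurd hx (not_le.mpr (Nat.pow_lt_pow_right hp.one_lt (by norm_num)))
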